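/- arXiv:2504.05346 — 6 statements merged into one kernel-verified Lean document; each statement's English description precedes it below -/
import Mathlib

section
/- (Optimal Brain Surgeon solution.) Let H ∈ ℝ^{b×b} be symmetric positive definite, let w ∈ ℝ^{1×b} be a row of weights, and fix q ∈ {1,…,b}; note H⁻¹_{qq} > 0. Define δ⋆ := −(w_q / H⁻¹_{qq}) H⁻¹_{q:} ∈ ℝ^{1×b}, where H⁻¹_{q:} is the q-th row of H⁻¹. Then: (a) δ⋆ satisfies the constraint (δ⋆)_q = −w_q; (b) (1/2) δ⋆ H (δ⋆)ᵀ = (1/2) w_q² / H⁻¹_{qq}; and (c) for every row vector δ ∈ ℝ^{1×b} with δ_q = −w_q, one has (1/2) δ H δᵀ ≥ (1/2) w_q² / H⁻¹_{qq}. Thus δ⋆ minimizes (1/2) δ H δᵀ subject to δ e^q + w_q = 0, and the minimal value is S^{OBS}_q = (1/2) w_q² / H⁻¹_{qq}. -/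
namespace Matrix

variable {n R : Type*} [Fintype n]

theorem dotProduct_mulVec_comm_of_isSymm [CommSemiring R] {H : Matrix n n R} (hH : H.IsSymm)
    (x y : n → R) : x ⬝ᵥ H *ᵥ y = y ⬝ᵥ H *ᵥ x := by
  rw [dotProduct_mulVec, ← mulVec_transpose, hH.eq, dotProduct_comm]

variable [DecidableEq n]

theorem dotProduct_mulVec_inv_row [CommRing R] {H : Matrix n n R} (hH : H.IsSymm)
    (hdet : IsUnit H.det) (v : n → R) (q : n) : v ⬝ᵥ H *ᵥ H⁻¹ q = v q :=
  calc v ⬝ᵥ H *ᵥ H⁻¹ q = (H⁻¹ *ᵥ (Hᵀ *ᵥ v)) q := by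
        rw [dotProduct_mulVec, dotProduct_comm, mulVec_transpose]; rfl
    _ = v q := by rw [hH.eq, mulVec_mulVec, nonsing_inv_mul H hdet, one_mulVec]

namespace PosDef

variable {H : Matrix n n ℝ} (hH : H.PosDef)
include hH

theorem dotProduct_mulVec_inv_row (v : n → ℝ) (q : n) : v ⬝ᵥ H *ᵥ H⁻¹ q = v q :=
  Matrix.dotProduct_mulVec_inv_row (isHermitian_iff_isSymm.mp hH.isHermitian)
    ((isUnit_iff_isUnit_det H).mp hH.isUnit) v q

/-- Completing the square along the row `H⁻¹ q`, which represents `δ ↦ δ q` in the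
`H`-inner product. -/
theorem sq_apply_div_inv_apply_le (δ : n → ℝ) (q : n) :
    δ q ^ 2 / H⁻¹ q q ≤ δ ⬝ᵥ H *ᵥ δ := by
  set u := H⁻¹ q
  have hu : 0 < u q := hH.inv.diag_pos
  set t := δ q / u q
  have hδu : δ ⬝ᵥ H *ᵥ u = δ q := hH.dotProduct_mulVec_inv_row δ q
  have huδ : u ⬝ᵥ H *ᵥ δ = δ q := by
    rw [dotProduct_mulVec_comm_of_isSymm (isHermitian_iff_isSymm.mp hH.isHermitian), hδu]
  have huu : u ⬝ᵥ H *ᵥ u = u q := hH.dotProduct_mulVec_inv_row u q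
  have hsquare : (δ - t • u) ⬝ᵥ H *ᵥ (δ - t • u) = δ ⬝ᵥ H *ᵥ δ - δ q ^ 2 / u q := by
    simp only [mulVec_sub, mulVec_smul, sub_dotProduct, dotProduct_sub, smul_dotProduct,
      dotProduct_smul, hδu, huδ, huu, smul_eq_mul, t]
    field_simp
    ring
  have hnonneg := hH.posSemidef.dotProduct_mulVec_nonneg (δ - t • u)
  rw [star_trivial, hsquare] at hnonneg
  linarith

end PosDef

end Matrix

open Matrix

/-- Optimal Brain Surgeon solution: for `H` symmetric positive definite,
`δ⋆ = −(w_q / H⁻¹_{qq}) H⁻¹_{q:}` is feasible, achieves loss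
`(1/2) w_q² / H⁻¹_{qq}`, and this value is a lower bound for the loss of any
feasible `δ`. -/
theorem thanos_stmt4 (b : ℕ) (H : Matrix (Fin b) (Fin b) ℝ) (hH : H.PosDef)
    (w : Fin b → ℝ) (q : Fin b)
    (δstar : Fin b → ℝ) (hδstar : δstar = fun j => -(w q / H⁻¹ q q) * H⁻¹ q j) :
    0 < H⁻¹ q q ∧
    δstar q = -(w q) ∧
    (1 / 2 : ℝ) * (δstar ⬝ᵥ H *ᵥ δstar) = (1 / 2 : ℝ) * (w q) ^ 2 / H⁻¹ q q ∧
    ∀ δ : Fin b → ℝ, δ q = -(w q) →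
      (1 / 2 : ℝ) * (w q) ^ 2 / H⁻¹ q q ≤ (1 / 2 : ℝ) * (δ ⬝ᵥ H *ᵥ δ) := by
  have hA : 0 < H⁻¹ q q := hH.inv.diag_pos
  replace hδstar : δstar = -(w q / H⁻¹ q q) • H⁻¹ q := hδstar
  refine ⟨hA, ?_, ?_, fun δ hδ => ?_⟩
  · rw [hδstar, Pi.smul_apply, smul_eq_mul]
    field_simp
  · rw [hδstar, smul_dotProduct, mulVec_smul, dotProduct_smul, hH.dotProduct_mulVec_inv_row,
      smul_eq_mul, smul_eq_mul]
    field_simp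
  · rw [mul_div_assoc, ← neg_sq, ← hδ]
    gcongr
    exact hH.sq_apply_div_inv_apply_le δ q
end

section
/- (OBD/Wanda metric under a diagonal Hessian.) Let X ∈ ℝ^{b×a} and suppose H := 2XXᵀ is diagonal and invertible. Then for every W ∈ ℝ^{c×b}, every k ∈ {1,…,c} and q ∈ {1,…,b}, the OBS saliency equals the squared Wanda metric: (1/2) W_{kq}² / H⁻¹_{qq} = W_{kq}² ‖X_{q:}‖₂² = (|W_{kq}| · ‖X_{q:}‖₂)², where X_{q:} ∈ ℝ^{1×a} is the q-th row of X. -/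
open Matrix BigOperators

/-- OBD/Wanda metric under a diagonal Hessian: if `H = 2XXᵀ` is diagonal and
invertible, then the OBS saliency `(1/2) W_{kq}² / H⁻¹_{qq}` equals
`W_{kq}² ‖X_{q:}‖₂² = (|W_{kq}| ‖X_{q:}‖₂)²`. -/
theorem thanos_stmt5 (a b : ℕ) (X : Matrix (Fin b) (Fin a) ℝ)
    (H : Matrix (Fin b) (Fin b) ℝ) (hH : H = (2 : ℝ) • (X * Xᵀ))
    (hdiag : H.IsDiag) (hinv : IsUnit H.det) :
    ∀ (c : ℕ) (W : Matrix (Fin c) (Fin b) ℝ) (k : Fin c) (q : Fin b),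
      (1 / 2 : ℝ) * (W k q) ^ 2 / H⁻¹ q q = (W k q) ^ 2 * ∑ i, (X q i) ^ 2 ∧
      (W k q) ^ 2 * ∑ i, (X q i) ^ 2 =
        (|W k q| * Real.sqrt (∑ i, (X q i) ^ 2)) ^ 2 := by
  intro c W k q
  have hHd : H = Matrix.diagonal H.diag := (hdiag.diagonal_diag).symm
  have hne : H q q ≠ 0 := by
    intro h0
    have : H.det = 0 := by
      rw [hHd, Matrix.det_diagonal]
      exact Finset.prod_eq_zero (Finset.mem_univ q) h0
    rw [this] at hinv
    simp at hinv
  have hmul : H⁻¹ q q * H q q = 1 := by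
    have h1 : H⁻¹ * H = 1 := Matrix.nonsing_inv_mul H hinv
    have := congrFun (congrFun h1 q) q
    rw [Matrix.mul_apply] at this
    have h2 : ∑ j : Fin b, H⁻¹ q j * H j q = 1 := by rw [Matrix.one_apply_eq] at this; exact this
    rw [← h2]
    symm
    apply Finset.sum_eq_single
    · intro j _ hj
      rw [hdiag hj, mul_zero]
    · simp
  have hinvqq : H⁻¹ q q = (H q q)⁻¹ := eq_inv_of_mul_eq_one_left hmul
  have hHqq : H q q = 2 * ∑ i, (X q i) ^ 2 := by
    rw [hH]
    simp [Matrix.mul_apply, Matrix.transpose_apply, sq, Finset.mul_sum]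
  constructor
  · rw [hinvqq, hHqq]
    have h2 : (2 : ℝ) * ∑ i, (X q i) ^ 2 ≠ 0 := hHqq ▸ hne
    field_simp
  · rw [mul_pow, sq_abs, Real.sq_sqrt (by positivity)]
end

section
/- (Optimality of the Thanos update.) Let H ∈ ℝ^{b×b} be symmetric positive definite, let w ∈ ℝ^{1×b}, and let 1 ≤ q₁ < ⋯ < q_s ≤ b. With R ∈ ℝ^{s×b} having rows R_{i:} = H⁻¹_{q_i:}, R̂_{ij} = H⁻¹_{q_i q_j}, u = (w_{q₁},…,w_{q_s}), and δ̂ = −u R̂⁻¹ R: for every row vector δ ∈ ℝ^{1×b} satisfying δ_{q_j} = −w_{q_j} for all j ∈ {1,…,s}, one has (1/2) δ H δᵀ ≥ (1/2) δ̂ H δ̂ᵀ, and the minimal value equals S = (1/2) u R̂⁻¹ R H Rᵀ (R̂⁻¹)ᵀ uᵀ. -/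
open Matrix

/-!
The rows `q` of `H⁻¹` times `H` are the rows `q` of the identity, so with `c = u R̂⁻¹` one gets
`δ̂ H z = -c · z_q` for every `z`. As a principal submatrix of the positive definite `H⁻¹`, `R̂`
is invertible, and the columns `q` of `R` form `R̂`, so `δ̂_q = -u` and `δ̂` is feasible. For any
feasible `δ` the difference `δ - δ̂` vanishes on `q`, hence is `H`-orthogonal to `δ̂`, and
`δ H δ = δ̂ H δ̂ + (δ - δ̂) H (δ - δ̂) ≥ δ̂ H δ̂`. The value of `S` is a rearrangement of `δ̂ H δ̂`.
-/

namespace Matrix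

variable {m n R : Type*}

theorem vecMul_dotProduct_mulVec_vecMul [Fintype m] [Fintype n] [CommSemiring R] (v : m → R)
    (A : Matrix m n R) (H : Matrix n n R) :
    v ᵥ* A ⬝ᵥ H *ᵥ (v ᵥ* A) = v ⬝ᵥ (A * H * Aᵀ) *ᵥ v := by
  rw [← mulVec_mulVec, ← mulVec_mulVec, mulVec_transpose, dotProduct_mulVec v A]

theorem one_submatrix_id_mulVec [Fintype n] [NonAssocSemiring R] [DecidableEq n] (e : m → n)
    (z : n → R) : (1 : Matrix n n R).submatrix e id *ᵥ z = z ∘ e := by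
  ext i
  simp [mulVec, dotProduct, one_apply]

theorem vecMul_inv_submatrix_dotProduct_mulVec [Fintype m] [Fintype n] [CommRing R]
    [DecidableEq n] {H : Matrix n n R} (hH : IsUnit H.det) (e : m → n) (c : m → R)
    (z : n → R) : c ᵥ* H⁻¹.submatrix e id ⬝ᵥ H *ᵥ z = c ⬝ᵥ z ∘ e := by
  have h_rows : H⁻¹.submatrix e id * H = (1 : Matrix n n R).submatrix e id := by
    rw [← nonsing_inv_mul H hH, submatrix_mul _ _ _ id _ Function.bijective_id, submatrix_id_id]
  rw [dotProduct_mulVec, vecMul_vecMul, h_rows, ← dotProduct_mulVec, one_submatrix_id_mulVec]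

theorem PosSemidef.dotProduct_mulVec_le_of_dotProduct_mulVec_sub_eq_zero [Fintype n] [CommRing R]
    [PartialOrder R] [StarRing R] [TrivialStar R] [IsOrderedRing R] {H : Matrix n n R}
    (hH : H.PosSemidef) {x y : n → R} (h : x ⬝ᵥ H *ᵥ (y - x) = 0) :
    x ⬝ᵥ H *ᵥ x ≤ y ⬝ᵥ H *ᵥ y := by
  set d := y - x
  have h_symm : d ⬝ᵥ H *ᵥ x = x ⬝ᵥ H *ᵥ d := by
    rw [dotProduct_mulVec, ← mulVec_transpose, dotProduct_comm,
      ← conjTranspose_eq_transpose_of_trivial, hH.1]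
  have hd : 0 ≤ d ⬝ᵥ H *ᵥ d := by simpa using hH.dotProduct_mulVec_nonneg d
  have hy : y = x + d := by simp [d]
  rw [hy, mulVec_add, dotProduct_add, add_dotProduct, add_dotProduct, h_symm, h]
  simpa using hd

end Matrix

/-- Optimality of the Thanos update: among all `δ` satisfying the `s` pruning
constraints, `δ̂ = −u R̂⁻¹ R` minimizes `(1/2) δ H δᵀ`, and the minimal value
is `S = (1/2) u R̂⁻¹ R H Rᵀ (R̂⁻¹)ᵀ uᵀ`. -/
theorem thanos_stmt8 (b s : ℕ) (H : Matrix (Fin b) (Fin b) ℝ) (hH : H.PosDef)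
    (w : Fin b → ℝ) (q : Fin s → Fin b) (hq : StrictMono q)
    (R : Matrix (Fin s) (Fin b) ℝ) (hR : R = Matrix.of fun i j => H⁻¹ (q i) j)
    (Rhat : Matrix (Fin s) (Fin s) ℝ)
    (hRhat : Rhat = Matrix.of fun i j => H⁻¹ (q i) (q j))
    (u : Fin s → ℝ) (hu : u = fun i => w (q i))
    (δhat : Fin b → ℝ)
    (hδhat : δhat = -(Matrix.vecMul (Matrix.vecMul u Rhat⁻¹) R)) :
    (∀ δ : Fin b → ℝ, (∀ j : Fin s, δ (q j) = -(w (q j))) →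
        (1 / 2 : ℝ) * (δhat ⬝ᵥ H *ᵥ δhat) ≤ (1 / 2 : ℝ) * (δ ⬝ᵥ H *ᵥ δ)) ∧
      (1 / 2 : ℝ) * (δhat ⬝ᵥ H *ᵥ δhat) =
        (1 / 2 : ℝ) * (u ⬝ᵥ (Rhat⁻¹ * R * H * Rᵀ * (Rhat⁻¹)ᵀ) *ᵥ u) := by
  replace hR : R = H⁻¹.submatrix q id := hR
  replace hRhat : Rhat = H⁻¹.submatrix q q := hRhat
  have hRhat_det : IsUnit Rhat.det := by
    rw [hRhat]
    exact (hH.inv.submatrix hq.injective).det_pos.ne'.isUnit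
  have hδhat_mulVec (z : Fin b → ℝ) : δhat ⬝ᵥ H *ᵥ z = -(u ᵥ* Rhat⁻¹ ⬝ᵥ z ∘ q) := by
    rw [hδhat, neg_dotProduct, hR,
      vecMul_inv_submatrix_dotProduct_mulVec hH.det_pos.ne'.isUnit]
  have hδhat_comp : δhat ∘ q = -(w ∘ q) := by
    have h_cols : (u ᵥ* Rhat⁻¹ ᵥ* R) ∘ q = u ᵥ* Rhat⁻¹ ᵥ* Rhat := by rw [hR, hRhat]; rfl
    rw [hδhat, Pi.neg_comp, h_cols, vecMul_vecMul, nonsing_inv_mul _ hRhat_det, vecMul_one, hu]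
    rfl
  refine ⟨fun δ hδ => ?_, ?_⟩
  · have hδ_comp : δ ∘ q = -(w ∘ q) := funext hδ
    have h_orth : δhat ⬝ᵥ H *ᵥ (δ - δhat) = 0 := by
      rw [hδhat_mulVec, Pi.sub_comp, hδ_comp, hδhat_comp, sub_self, dotProduct_zero, neg_zero]
    gcongr
    exact hH.posSemidef.dotProduct_mulVec_le_of_dotProduct_mulVec_sub_eq_zero h_orth
  · rw [hδhat, mulVec_neg, neg_dotProduct, dotProduct_neg, neg_neg, vecMul_vecMul,
      vecMul_dotProduct_mulVec_vecMul, transpose_mul]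
    simp only [Matrix.mul_assoc]
end

section
/- Let H ∈ ℝ^{b×b} be symmetric and invertible, let 1 ≤ q₁ < ⋯ < q_s ≤ b, let R ∈ ℝ^{s×b} have rows R_{i:} = H⁻¹_{q_i:}, and let R̂ ∈ ℝ^{s×s} have entries R̂_{ij} = H⁻¹_{q_i q_j}. Then R H Rᵀ = R̂. Consequently, the Thanos optimal loss S = (1/2) u R̂⁻¹ R H Rᵀ (R̂⁻¹)ᵀ uᵀ simplifies to S = (1/2) u R̂⁻¹ uᵀ for every u ∈ ℝ^{1×s}, provided R̂ is invertible. -/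
open Matrix

/-- For symmetric invertible `H`, `R H Rᵀ = R̂`, so the Thanos optimal loss
`(1/2) u R̂⁻¹ R H Rᵀ (R̂⁻¹)ᵀ uᵀ` simplifies to `(1/2) u R̂⁻¹ uᵀ` when `R̂` is
invertible. -/
theorem thanos_stmt9 (b s : ℕ) (H : Matrix (Fin b) (Fin b) ℝ)
    (hsymm : Hᵀ = H) (hinv : IsUnit H.det)
    (q : Fin s → Fin b) (hq : StrictMono q)
    (R : Matrix (Fin s) (Fin b) ℝ) (hR : R = Matrix.of fun i j => H⁻¹ (q i) j)
    (Rhat : Matrix (Fin s) (Fin s) ℝ)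
    (hRhat : Rhat = Matrix.of fun i j => H⁻¹ (q i) (q j)) :
    R * H * Rᵀ = Rhat ∧
      (IsUnit Rhat.det → ∀ u : Fin s → ℝ,
        (1 / 2 : ℝ) * (u ⬝ᵥ (Rhat⁻¹ * R * H * Rᵀ * (Rhat⁻¹)ᵀ) *ᵥ u) =
          (1 / 2 : ℝ) * (u ⬝ᵥ Rhat⁻¹ *ᵥ u)) := by
  have hinvsymm : (H⁻¹)ᵀ = H⁻¹ := by
    rw [Matrix.transpose_nonsing_inv, hsymm]
  have hRH : R * H = Matrix.of fun i j => (1 : Matrix (Fin b) (Fin b) ℝ) (q i) j := by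
    subst hR
    ext i j
    simp [Matrix.mul_apply, ← Matrix.nonsing_inv_mul H hinv]
  have hmain : R * H * Rᵀ = Rhat := by
    rw [hRH, hRhat]
    ext i j
    simp only [Matrix.mul_apply, Matrix.of_apply, Matrix.transpose_apply, hR,
      Matrix.one_apply]
    rw [Finset.sum_eq_single (q i)]
    · have := congrFun (congrFun hinvsymm (q i)) (q j)
      simpa using this
    · intro k _ hk
      simp [hk.symm]
    · simp
  refine ⟨hmain, fun hRu u => ?_⟩
  have hRhatsymm : Rhatᵀ = Rhat := by
    rw [hRhat]
    ext i j
    simpa using (congrFun (congrFun hinvsymm (q j)) (q i)).symm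
  have : Rhat⁻¹ * R * H * Rᵀ * (Rhat⁻¹)ᵀ = Rhat⁻¹ := by
    rw [Matrix.mul_assoc (Rhat⁻¹) R H, Matrix.mul_assoc (Rhat⁻¹) (R * H) Rᵀ,
      hmain,
      show (Rhat⁻¹)ᵀ = Rhat⁻¹ by rw [Matrix.transpose_nonsing_inv, hRhatsymm],
      Matrix.nonsing_inv_mul _ hRu, Matrix.one_mul]
  rw [this]
end

section
/- (Structured pruning update.) Let H ∈ ℝ^{b×b} be symmetric positive definite, let W ∈ ℝ^{c×b}, and fix s ∈ {1,…,b}. Taking the pruning indices q_j = j for j = 1,…,s (the first s columns), the Thanos update for row k of W is δ̂ = −W_{k,1:s} (H⁻¹_{1:s,1:s})⁻¹ H⁻¹_{1:s,:} ∈ ℝ^{1×b}, where W_{k,1:s} ∈ ℝ^{1×s} consists of the first s entries of row k, H⁻¹_{1:s,1:s} is the top-left s×s principal submatrix of H⁻¹, and H⁻¹_{1:s,:} ∈ ℝ^{s×b} consists of the first s rows of H⁻¹. This update satisfies δ̂_j = −W_{kj} for each j ∈ {1,…,s}, and it minimizes (1/2) δ H δᵀ over all δ ∈ ℝ^{1×b}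 with δ_j = −W_{kj} for j = 1,…,s. -/
/-!
Restricting `R = H⁻¹_{q,:}` to the pruned columns gives `R̂`, so `δ̂_q = -u R̂⁻¹ R̂ = -u`.
For optimality, `δ̂ H = -u R̂⁻¹ (H⁻¹ H)_{q,:}` is supported on the pruned coordinates, hence
orthogonal to every feasible direction `δ - δ̂`; the quadratic form then splits as
`δ H δᵀ = δ̂ H δ̂ᵀ + (δ - δ̂) H (δ - δ̂)ᵀ ≥ δ̂ H δ̂ᵀ`.
-/

open Matrix

namespace Matrix

variable {m n α : Type*}

theorem one_submatrix_mulVec [Fintype n] [DecidableEq n] [NonAssocSemiring α] (e : m → n)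
    (v : n → α) : (1 : Matrix n n α).submatrix e id *ᵥ v = v ∘ e := by
  ext i
  simp [mulVec, dotProduct, one_apply]

theorem vecMul_nonsing_inv_submatrix_vecMul_comp [Fintype m] [DecidableEq m] [CommRing α]
    (A : Matrix n n α) (e : m → n) (hA : IsUnit (A.submatrix e e).det) (u : m → α) :
    (u ᵥ* (A.submatrix e e)⁻¹ ᵥ* A.submatrix e id) ∘ e = u := by
  change u ᵥ* (A.submatrix e e)⁻¹ ᵥ* A.submatrix e e = u
  rw [vecMul_vecMul, nonsing_inv_mul _ hA, vecMul_one]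

theorem vecMul_nonsing_inv_submatrix_vecMul_dotProduct [Fintype m] [Fintype n] [DecidableEq n]
    [CommRing α] {H : Matrix n n α} (hH : IsUnit H.det) (e : m → n) (w : m → α) (v : n → α) :
    (w ᵥ* H⁻¹.submatrix e id) ᵥ* H ⬝ᵥ v = w ⬝ᵥ v ∘ e := by
  have hmul : H⁻¹.submatrix e id * H = (1 : Matrix n n α).submatrix e id := by
    rw [← nonsing_inv_mul H hH, submatrix_mul _ _ _ id _ Function.bijective_id, submatrix_id_id]
  rw [vecMul_vecMul, hmul, ← dotProduct_mulVec, one_submatrix_mulVec]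

theorem PosSemidef.dotProduct_mulVec_le_of_vecMul_dotProduct_sub_eq_zero [Fintype n]
    {H : Matrix n n ℝ} (hH : H.PosSemidef) {x y : n → ℝ} (h : x ᵥ* H ⬝ᵥ (y - x) = 0) :
    x ⬝ᵥ H *ᵥ x ≤ y ⬝ᵥ H *ᵥ y := by
  set d := y - x
  have hy : y = x + d := by simp [d]
  have hcross : d ⬝ᵥ H *ᵥ x = 0 := by
    rw [dotProduct_mulVec, ← mulVec_transpose, ← conjTranspose_eq_transpose_of_trivial,
      hH.isHermitian.eq, dotProduct_comm, ← h, dotProduct_mulVec]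
  have hd : 0 ≤ d ⬝ᵥ H *ᵥ d := by simpa using hH.dotProduct_mulVec_nonneg d
  rw [hy, mulVec_add, dotProduct_add, add_dotProduct, add_dotProduct, dotProduct_mulVec x H d,
    h, hcross]
  linarith

end Matrix

theorem thanos_stmt11_general (b c s : ℕ) (hs : s ≤ b)
    (H : Matrix (Fin b) (Fin b) ℝ) (hH : H.PosDef)
    (W : Matrix (Fin c) (Fin b) ℝ) (k : Fin c)
    (R : Matrix (Fin s) (Fin b) ℝ)
    (hR : R = Matrix.of fun i j => H⁻¹ (Fin.castLE hs i) j)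
    (Rhat : Matrix (Fin s) (Fin s) ℝ)
    (hRhat : Rhat = Matrix.of fun i j => H⁻¹ (Fin.castLE hs i) (Fin.castLE hs j))
    (u : Fin s → ℝ) (hu : u = fun j => W k (Fin.castLE hs j))
    (δhat : Fin b → ℝ)
    (hδhat : δhat = -(Matrix.vecMul (Matrix.vecMul u Rhat⁻¹) R)) :
    (∀ j : Fin s, δhat (Fin.castLE hs j) = -(W k (Fin.castLE hs j))) ∧
      ∀ δ : Fin b → ℝ, (∀ j : Fin s, δ (Fin.castLE hs j) = -(W k (Fin.castLE hs j))) →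
        (1 / 2 : ℝ) * (δhat ⬝ᵥ H *ᵥ δhat) ≤ (1 / 2 : ℝ) * (δ ⬝ᵥ H *ᵥ δ) := by
  set e := Fin.castLE hs
  replace hR : R = H⁻¹.submatrix e id := hR
  replace hRhat : Rhat = H⁻¹.submatrix e e := hRhat
  have hH_det : IsUnit H.det := (isUnit_iff_isUnit_det H).mp hH.isUnit
  have hRhat_det : IsUnit (H⁻¹.submatrix e e).det :=
    (isUnit_iff_isUnit_det _).mp (hH.inv.submatrix (Fin.castLE_injective hs)).isUnit
  have hfeas : δhat ∘ e = -(W k ∘ e) := by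
    rw [hδhat, hR, Pi.neg_comp, hRhat, vecMul_nonsing_inv_submatrix_vecMul_comp _ _ hRhat_det, hu]
    rfl
  refine ⟨fun j => congrFun hfeas j, fun δ hδ => ?_⟩
  have hgrad : ∀ v, δhat ᵥ* H ⬝ᵥ v = -(u ᵥ* Rhat⁻¹ ⬝ᵥ v ∘ e) := fun v => by
    rw [hδhat, neg_vecMul, neg_dotProduct, hR,
      vecMul_nonsing_inv_submatrix_vecMul_dotProduct hH_det]
  have hδe : δ ∘ e = -(W k ∘ e) := funext hδ
  gcongr
  refine hH.posSemidef.dotProduct_mulVec_le_of_vecMul_dotProduct_sub_eq_zero ?_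
  rw [hgrad, Pi.sub_comp, hδe, hfeas, sub_self, dotProduct_zero, neg_zero]

/-- Structured pruning update: pruning the first `s` columns of row `k` of `W`
via `δ̂ = −W_{k,1:s} (H⁻¹_{1:s,1:s})⁻¹ H⁻¹_{1:s,:}` is feasible (it zeroes the
first `s` weights of the row) and minimizes `(1/2) δ H δᵀ` over all feasible
`δ`. -/
theorem thanos_stmt11 (b c s : ℕ) (hs1 : 1 ≤ s) (hs : s ≤ b)
    (H : Matrix (Fin b) (Fin b) ℝ) (hH : H.PosDef)
    (W : Matrix (Fin c) (Fin b) ℝ) (k : Fin c)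
    (R : Matrix (Fin s) (Fin b) ℝ)
    (hR : R = Matrix.of fun i j => H⁻¹ (Fin.castLE hs i) j)
    (Rhat : Matrix (Fin s) (Fin s) ℝ)
    (hRhat : Rhat = Matrix.of fun i j => H⁻¹ (Fin.castLE hs i) (Fin.castLE hs j))
    (u : Fin s → ℝ) (hu : u = fun j => W k (Fin.castLE hs j))
    (δhat : Fin b → ℝ)
    (hδhat : δhat = -(Matrix.vecMul (Matrix.vecMul u Rhat⁻¹) R)) :
    (∀ j : Fin s, δhat (Fin.castLE hs j) = -(W k (Fin.castLE hs j))) ∧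
      ∀ δ : Fin b → ℝ, (∀ j : Fin s, δ (Fin.castLE hs j) = -(W k (Fin.castLE hs j))) →
        (1 / 2 : ℝ) * (δhat ⬝ᵥ H *ᵥ δhat) ≤ (1 / 2 : ℝ) * (δ ⬝ᵥ H *ᵥ δ) :=
  thanos_stmt11_general b c s hs H hH W k R hR Rhat hRhat u hu δhat hδhat
end

section
/- (Multi-constraint Lagrangian stationarity determines the Thanos update.) Let H ∈ ℝ^{b×b} be symmetric positive definite, w ∈ ℝ^{1×b}, and 1 ≤ q₁ < ⋯ < q_s ≤ b. With R ∈ ℝ^{s×b} having rows R_{i:} = H⁻¹_{q_i:}, R̂_{ij} = H⁻¹_{q_i q_j}, and u = (w_{q₁},…,w_{q_s}): if δ ∈ ℝ^{1×b} and λ = (λ₁,…,λ_s) ∈ ℝ^{1×s} satisfy H δᵀ + Σ_{j=1}^{s} λ_j e^{q_j} = 0 and δ_{q_j} + w_{q_j} = 0 for all j, then λ R̂ = u, hence λ = u R̂⁻¹ and δ = −u R̂⁻¹ R. -/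
/-!
Since `H⁻¹` is symmetric, stationarity solves to `δ = -λ R`. Reading this off at the
coordinates `q` turns feasibility into `λ R̂ = u`, and `R̂` is a principal submatrix of the
positive definite `H⁻¹`, hence invertible.
-/

open Matrix

namespace Matrix

variable {l m n R : Type*} [Fintype m] [Fintype n] [DecidableEq n] [CommRing R]

theorem mulVec_sum_smul_single_one (A : Matrix l n R) (q : m → n) (lam : m → R) :
    A *ᵥ ∑ j, lam j • Pi.single (q j) 1 = A.submatrix id q *ᵥ lam := by
  simp only [mulVec_sum, mulVec_smul, mulVec_single_one]
  ext i
  simp [mulVec, dotProduct, mul_comm]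

theorem eq_neg_vecMul_of_mulVec_add_sum_smul_single_eq_zero {H : Matrix n n R}
    (hsymm : H.IsSymm) (hdet : IsUnit H.det) {δ : n → R} {q : m → n} {lam : m → R}
    (hstat : H *ᵥ δ + ∑ j, lam j • Pi.single (q j) 1 = 0) :
    δ = -(lam ᵥ* H⁻¹.submatrix q id) := by
  have hHδ : H *ᵥ δ = -∑ j, lam j • Pi.single (q j) 1 := eq_neg_of_add_eq_zero_left hstat
  have hcols : H⁻¹.submatrix id q = (H⁻¹.submatrix q id)ᵀ := by
    rw [transpose_submatrix, hsymm.inv.eq]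
  calc δ = H⁻¹ *ᵥ (H *ᵥ δ) := by rw [mulVec_mulVec, nonsing_inv_mul _ hdet, one_mulVec]
    _ = -(lam ᵥ* H⁻¹.submatrix q id) := by
      rw [hHδ, mulVec_neg, mulVec_sum_smul_single_one, hcols, mulVec_transpose]

end Matrix

/-- Multi-constraint Lagrangian stationarity determines the Thanos update:
stationarity `H δᵀ + Σ_j λ_j e^{q_j} = 0` and feasibility
`δ_{q_j} + w_{q_j} = 0` imply `λ R̂ = u`, hence `λ = u R̂⁻¹` and
`δ = −u R̂⁻¹ R`. -/
theorem thanos_stmt18 (b s : ℕ) (H : Matrix (Fin b) (Fin b) ℝ) (hH : H.PosDef)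
    (w : Fin b → ℝ) (q : Fin s → Fin b) (hq : StrictMono q)
    (R : Matrix (Fin s) (Fin b) ℝ) (hR : R = Matrix.of fun i j => H⁻¹ (q i) j)
    (Rhat : Matrix (Fin s) (Fin s) ℝ)
    (hRhat : Rhat = Matrix.of fun i j => H⁻¹ (q i) (q j))
    (u : Fin s → ℝ) (hu : u = fun i => w (q i))
    (δ : Fin b → ℝ) (lam : Fin s → ℝ)
    (hstat : H *ᵥ δ + ∑ j, lam j • (Pi.single (q j) 1 : Fin b → ℝ) = 0)
    (hfeas : ∀ j : Fin s, δ (q j) + w (q j) = 0) :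
    Matrix.vecMul lam Rhat = u ∧
      lam = Matrix.vecMul u Rhat⁻¹ ∧
      δ = -(Matrix.vecMul (Matrix.vecMul u Rhat⁻¹) R) := by
  replace hR : R = H⁻¹.submatrix q id := hR
  replace hRhat : Rhat = H⁻¹.submatrix q q := hRhat
  have hsymm : H.IsSymm := (conjTranspose_eq_transpose_of_trivial H).symm.trans hH.isHermitian
  have hδ : δ = -(lam ᵥ* R) := hR ▸
    eq_neg_vecMul_of_mulVec_add_sum_smul_single_eq_zero hsymm
      ((isUnit_iff_isUnit_det H).mp hH.isUnit) hstat
  have hlam : lam ᵥ* Rhat = u := by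
    ext i
    have hδi : δ (q i) = -(lam ᵥ* Rhat) i := by rw [hδ, hR, hRhat]; rfl
    linarith [hfeas i, congrFun hu i]
  have hRhat_unit : IsUnit Rhat.det :=
    (isUnit_iff_isUnit_det Rhat).mp (hRhat ▸ (hH.inv.submatrix hq.injective).isUnit)
  have hlam' : lam = u ᵥ* Rhat⁻¹ := by
    rw [← hlam, vecMul_vecMul, mul_nonsing_inv _ hRhat_unit, vecMul_one]
  exact ⟨hlam, hlam', hlam' ▸ hδ⟩
end
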